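/- Fix a joint pmf P_{XY} on 𝒳 × 𝒴 and a sequence y^n ∈ 𝒴^n. For every ε > 0 there exist δ_0 > 0 and n_0 such that for all 0 < δ ≤ δ_0, all n ≥ n_0, and all z^n ∈ 𝒵^n: if X^n is distributed according to ∏_{i=1}^n P_{X|Y=y_i}, then P[ d(X^n, z^n) ≤ D and (X^n, y^n) ∈ 𝒯_δ^n(X,Y) ] ≤ 2^{−n(R_Y(D) − ε)}, where R_Y(D) := min over conditional pmfs P_{Z|XY} with E[d(X,Z)] ≤ D of I(X;Z|Y). -/

import Mathlib

open scoped BigOperators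
open Classical Filter

def IsPMF {A : Type*} [Fintype A] (p : A → ℝ) : Prop :=
  (∀ a, 0 ≤ p a) ∧ ∑ a, p a = 1

def IsCondPMF {A B : Type*} [Fintype B] (W : A → B → ℝ) : Prop :=
  ∀ a, IsPMF (W a)

/-- Conditional mutual information `I(X;Z|Y)` of a joint pmf `q` on `X × Y × Z`. -/
noncomputable def condMI {X Y Z : Type*} [Fintype X] [Fintype Y] [Fintype Z]
    (q : X × Y × Z → ℝ) : ℝ :=
  ∑ t : X × Y × Z, q t * Real.logb 2
    (q t * (∑ x, ∑ z, q (x, t.2.1, z)) /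
      ((∑ z, q (t.1, t.2.1, z)) * (∑ x, q (x, t.2.1, t.2.2))))

noncomputable def dseq {X Z : Type*} (d : X → Z → ℝ) {n : ℕ} (x : Fin n → X) (z : Fin n → Z) : ℝ :=
  (∑ i, d (x i) (z i)) / n

/-- Total variation distance between pmfs on a finite alphabet. -/
noncomputable def tvDist {A : Type*} [Fintype A] (p q : A → ℝ) : ℝ :=
  (∑ a, |p a - q a|) / 2

/-- Empirical joint distribution (joint type) of a pair of sequences. -/
noncomputable def jointType {X Y : Type*} [Fintype X] [Fintype Y] {n : ℕ}
    (x : Fin n → X) (y : Fin n → Y) : X × Y → ℝ :=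
  fun ab => ((Finset.univ.filter (fun i => x i = ab.1 ∧ y i = ab.2)).card : ℝ) / n

/-- The rate-distortion function with side information `Y` at encoder and decoder:
`R_Y(D) = min over P_{Z|XY} with E[d(X,Z)] ≤ D of I(X;Z|Y)`, for the joint pmf
`P_{XY}(x,y) = P_Y(y) P_{X|Y}(x|y)`. -/
noncomputable def RYDF {X Y Z : Type*} [Fintype X] [Fintype Y] [Fintype Z]
    (PY : Y → ℝ) (W : Y → X → ℝ) (d : X → Z → ℝ) (D : ℝ) : ℝ :=
  sInf { r | ∃ V : X × Y → Z → ℝ, IsCondPMF V ∧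
    (∑ x, ∑ y, ∑ z, PY y * W y x * V (x, y) z * d x z) ≤ D ∧
    r = condMI (fun t : X × Y × Z => PY t.2.1 * W t.2.1 t.1 * V (t.1, t.2.1) t.2.2) }

namespace TBSI

/-- Gibbs-type inequality. -/
lemma gibbs {A : Type*} [Fintype A] (p r : A → ℝ) (hp : ∀ a, 0 ≤ p a)
    (hr : ∀ a, 0 ≤ r a) (hpr : ∀ a, 0 < p a → 0 < r a)
    (hsum : ∑ a, (if 0 < p a then r a else 0) ≤ ∑ a, p a) :
    ∑ a, p a * Real.logb 2 (r a / p a) ≤ 0 := by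
  have h2 : (0:ℝ) < Real.log 2 := Real.log_pos one_lt_two
  have key : ∀ a, p a * Real.logb 2 (r a / p a)
      ≤ ((if 0 < p a then r a else 0) - p a) / Real.log 2 := by
    intro a
    rcases eq_or_lt_of_le (hp a) with h | h
    · simp [← h]
    · have hra := hpr a h
      rw [if_pos h]
      have hpos : 0 < r a / p a := div_pos hra h
      have hlog := Real.log_le_sub_one_of_pos hpos
      have : p a * Real.logb 2 (r a / p a) ≤ p a * ((r a / p a - 1) / Real.log 2) := by
        apply mul_le_mul_of_nonneg_left _ h.le
        rw [Real.logb]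
        gcongr
      refine this.trans_eq ?_
      field_simp
  calc ∑ a, p a * Real.logb 2 (r a / p a)
      ≤ ∑ a, ((if 0 < p a then r a else 0) - p a) / Real.log 2 :=
        Finset.sum_le_sum fun a _ => key a
    _ = ((∑ a, (if 0 < p a then r a else 0)) - ∑ a, p a) / Real.log 2 := by
        rw [← Finset.sum_div, Finset.sum_sub_distrib]
    _ ≤ 0 := div_nonpos_of_nonpos_of_nonneg (by linarith) h2.le

variable {X Y Z : Type*} [Fintype X] [Fintype Y] [Fintype Z]

noncomputable def mXY (q : X × Y × Z → ℝ) : X × Y → ℝ := fun ab => ∑ c, q (ab.1, ab.2, c)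
noncomputable def mYZ (q : X × Y × Z → ℝ) : Y × Z → ℝ := fun bc => ∑ a, q (a, bc.1, bc.2)
noncomputable def mY (q : X × Y × Z → ℝ) : Y → ℝ := fun b => ∑ a, ∑ c, q (a, b, c)

lemma sum3 (f : X × Y × Z → ℝ) : ∑ t, f t = ∑ a, ∑ b, ∑ c, f (a, b, c) := by
  rw [Fintype.sum_prod_type]
  exact Finset.sum_congr rfl fun a _ => Fintype.sum_prod_type _

lemma condMI_def (q : X × Y × Z → ℝ) :
    condMI q = ∑ t : X × Y × Z, q t * Real.logb 2
      (q t * mY q t.2.1 / (mXY q (t.1, t.2.1) * mYZ q (t.2.1, t.2.2))) := rfl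

variable (q : X × Y × Z → ℝ)

lemma mXY_nonneg (h : ∀ t, 0 ≤ q t) (ab : X × Y) : 0 ≤ mXY q ab :=
  Finset.sum_nonneg fun _ _ => h _

lemma mYZ_nonneg (h : ∀ t, 0 ≤ q t) (bc : Y × Z) : 0 ≤ mYZ q bc :=
  Finset.sum_nonneg fun _ _ => h _

lemma mY_nonneg (h : ∀ t, 0 ≤ q t) (b : Y) : 0 ≤ mY q b :=
  Finset.sum_nonneg fun _ _ => Finset.sum_nonneg fun _ _ => h _

lemma le_mXY (h : ∀ t, 0 ≤ q t) (t : X × Y × Z) : q t ≤ mXY q (t.1, t.2.1) := by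
  have := Finset.single_le_sum (f := fun c => q (t.1, t.2.1, c))
    (fun c _ => h _) (Finset.mem_univ t.2.2)
  exact this

lemma le_mYZ (h : ∀ t, 0 ≤ q t) (t : X × Y × Z) : q t ≤ mYZ q (t.2.1, t.2.2) := by
  have := Finset.single_le_sum (f := fun a => q (a, t.2.1, t.2.2))
    (fun a _ => h _) (Finset.mem_univ t.1)
  exact this

lemma mXY_le_mY (h : ∀ t, 0 ≤ q t) (a : X) (b : Y) : mXY q (a, b) ≤ mY q b :=
  Finset.single_le_sum (f := fun a' => ∑ c, q (a', b, c))
    (fun a' _ => Finset.sum_nonneg fun _ _ => h _) (Finset.mem_univ a)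

lemma sum_mY (hq : IsPMF q) : ∑ b, mY q b = 1 := by
  rw [← hq.2, sum3 q, Finset.sum_comm]
  exact Finset.sum_congr rfl fun b _ => rfl

lemma sum_mXY : ∑ ab : X × Y, mXY q ab = ∑ t, q t := by
  rw [sum3 q, Fintype.sum_prod_type]
  rfl

lemma sum_mXY_fst (b : Y) : ∑ a, mXY q (a, b) = mY q b := rfl

lemma sum_mYZ_snd (b : Y) : ∑ c, mYZ q (b, c) = mY q b := by
  unfold mYZ mY
  rw [Finset.sum_comm]

/-- grouping: sum against a function of the (x,y) coordinates -/
lemma sum_mul_comp_XY (g : X × Y → ℝ) :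
    ∑ t : X × Y × Z, q t * g (t.1, t.2.1) = ∑ ab : X × Y, mXY q ab * g ab := by
  rw [sum3 (fun t : X × Y × Z => q t * g (t.1, t.2.1)), Fintype.sum_prod_type]
  refine Finset.sum_congr rfl fun a _ => ?_
  refine Finset.sum_congr rfl fun b _ => ?_
  rw [mXY, Finset.sum_mul]

lemma sum_mul_comp_YZ (g : Y × Z → ℝ) :
    ∑ t : X × Y × Z, q t * g (t.2.1, t.2.2) = ∑ bc : Y × Z, mYZ q bc * g bc := by
  rw [Fintype.sum_prod_type (f := fun t : X × Y × Z => q t * g (t.2.1, t.2.2)), Finset.sum_comm]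
  refine Finset.sum_congr rfl fun bc _ => ?_
  rw [mYZ, Finset.sum_mul]

lemma sum_mul_comp_Y (g : Y → ℝ) :
    ∑ t : X × Y × Z, q t * g t.2.1 = ∑ b, mY q b * g b := by
  have := sum_mul_comp_XY q (fun ab => g ab.2)
  rw [this, Fintype.sum_prod_type (f := fun ab : X × Y => mXY q ab * g ab.2), Finset.sum_comm]
  refine Finset.sum_congr rfl fun b _ => ?_
  rw [mY, Finset.sum_mul]
  rfl

lemma condMI_nonneg (hq : IsPMF q) : 0 ≤ condMI q := by
  set r : X × Y × Z → ℝ := fun t =>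
    mXY q (t.1, t.2.1) * mYZ q (t.2.1, t.2.2) / mY q t.2.1 with hr_def
  have h0 := hq.1
  have hneg : condMI q = -∑ t, q t * Real.logb 2 (r t / q t) := by
    rw [condMI_def, ← Finset.sum_neg_distrib]
    refine Finset.sum_congr rfl fun t _ => ?_
    rcases eq_or_lt_of_le (h0 t) with h | h
    · simp [← h]
    · have hmxy : 0 < mXY q (t.1, t.2.1) := lt_of_lt_of_le h (le_mXY q h0 t)
      have hmyz : 0 < mYZ q (t.2.1, t.2.2) := lt_of_lt_of_le h (le_mYZ q h0 t)
      have hmy : 0 < mY q t.2.1 := lt_of_lt_of_le hmxy (mXY_le_mY q h0 _ _)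
      have harg : q t * mY q t.2.1 / (mXY q (t.1, t.2.1) * mYZ q (t.2.1, t.2.2))
          = (r t / q t)⁻¹ := by
        rw [hr_def]
        field_simp
      rw [harg, Real.logb_inv, mul_neg]
  rw [hneg, neg_nonneg]
  refine gibbs q r h0 ?_ ?_ ?_
  · intro t
    exact div_nonneg (mul_nonneg (mXY_nonneg q h0 _) (mYZ_nonneg q h0 _)) (mY_nonneg q h0 _)
  · intro t ht
    have hmxy : 0 < mXY q (t.1, t.2.1) := lt_of_lt_of_le ht (le_mXY q h0 t)
    have hmyz : 0 < mYZ q (t.2.1, t.2.2) := lt_of_lt_of_le ht (le_mYZ q h0 t)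
    have hmy : 0 < mY q t.2.1 := lt_of_lt_of_le hmxy (mXY_le_mY q h0 _ _)
    exact div_pos (mul_pos hmxy hmyz) hmy
  · rw [hq.2]
    have step1 : ∀ t : X × Y × Z, (if 0 < q t then r t else 0)
        ≤ (if 0 < mY q t.2.1 then r t else 0) := by
      intro t
      by_cases h : 0 < q t
      · have hmy : 0 < mY q t.2.1 :=
          lt_of_lt_of_le (lt_of_lt_of_le h (le_mXY q h0 t)) (mXY_le_mY q h0 _ _)
        rw [if_pos h, if_pos hmy]
      · rw [if_neg h]
        by_cases h' : 0 < mY q t.2.1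
        · rw [if_pos h']
          exact div_nonneg (mul_nonneg (mXY_nonneg q h0 _) (mYZ_nonneg q h0 _)) (mY_nonneg q h0 _)
        · rw [if_neg h']
    calc ∑ t, (if 0 < q t then r t else 0)
        ≤ ∑ t, (if 0 < mY q t.2.1 then r t else 0) := Finset.sum_le_sum fun t _ => step1 t
      _ = ∑ b, (if 0 < mY q b then mY q b else 0) := by
          rw [sum3 (fun t : X × Y × Z => if 0 < mY q t.2.1 then r t else 0), Finset.sum_comm]
          refine Finset.sum_congr rfl fun b _ => ?_
          by_cases hb : 0 < mY q b
          · simp only [hr_def, if_pos hb]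
            have : ∀ a : X, ∑ c, mXY q (a, b) * mYZ q (b, c) / mY q b
                = mXY q (a, b) * mY q b / mY q b := by
              intro a
              rw [← Finset.sum_div, ← Finset.mul_sum, sum_mYZ_snd]
            calc ∑ a, ∑ c, mXY q (a, b) * mYZ q (b, c) / mY q b
                = ∑ a, mXY q (a, b) * mY q b / mY q b := Finset.sum_congr rfl fun a _ => this a
              _ = ∑ a, mXY q (a, b) := by
                  refine Finset.sum_congr rfl fun a _ => ?_
                  rw [mul_div_assoc, div_self hb.ne', mul_one]
              _ = mY q b := sum_mXY_fst q b
          · simp only [if_neg hb]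
            simp
      _ ≤ ∑ b, mY q b := Finset.sum_le_sum fun b _ => by
          by_cases hb : 0 < mY q b
          · rw [if_pos hb]
          · rw [if_neg hb]; exact mY_nonneg q h0 b
      _ = 1 := sum_mY q hq

noncomputable def phi (u : ℝ) : ℝ := u * Real.logb 2 u

lemma continuous_phi : Continuous phi := by
  have h : phi = fun u => (u * Real.log u) / Real.log 2 := by
    funext u; rw [phi, Real.logb]; ring
  rw [h]
  exact Real.continuous_mul_log.div_const _

noncomputable def Phi (q : X × Y × Z → ℝ) : ℝ :=
  (∑ t, phi (q t)) + (∑ b, phi (mY q b))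
    - (∑ ab : X × Y, phi (mXY q ab)) - (∑ bc : Y × Z, phi (mYZ q bc))

lemma condMI_eq_Phi (h0 : ∀ t, 0 ≤ q t) : condMI q = Phi q := by
  have per : ∀ t : X × Y × Z, q t * Real.logb 2
      (q t * mY q t.2.1 / (mXY q (t.1, t.2.1) * mYZ q (t.2.1, t.2.2)))
      = phi (q t) + q t * Real.logb 2 (mY q t.2.1)
        - q t * Real.logb 2 (mXY q (t.1, t.2.1)) - q t * Real.logb 2 (mYZ q (t.2.1, t.2.2)) := by
    intro t
    rcases eq_or_lt_of_le (h0 t) with h | h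
    · simp [← h, phi]
    · have hmxy : 0 < mXY q (t.1, t.2.1) := lt_of_lt_of_le h (le_mXY q h0 t)
      have hmyz : 0 < mYZ q (t.2.1, t.2.2) := lt_of_lt_of_le h (le_mYZ q h0 t)
      have hmy : 0 < mY q t.2.1 := lt_of_lt_of_le hmxy (mXY_le_mY q h0 _ _)
      rw [Real.logb_div (by positivity) (by positivity), Real.logb_mul h.ne' hmy.ne',
        Real.logb_mul hmxy.ne' hmyz.ne', phi]
      ring
  rw [condMI_def, Finset.sum_congr rfl fun t _ => per t, Phi,
    Finset.sum_sub_distrib, Finset.sum_sub_distrib, Finset.sum_add_distrib,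
    sum_mul_comp_Y q (fun b => Real.logb 2 (mY q b)),
    sum_mul_comp_XY q (fun ab => Real.logb 2 (mXY q ab)),
    sum_mul_comp_YZ q (fun bc => Real.logb 2 (mYZ q bc))]
  simp [phi]

lemma continuous_mXY (ab : X × Y) : Continuous (fun q : X × Y × Z → ℝ => mXY q ab) :=
  continuous_finset_sum _ fun c _ => continuous_apply _

lemma continuous_Phi : Continuous (fun q : X × Y × Z → ℝ => Phi q) := by
  have h1 : Continuous (fun q : X × Y × Z → ℝ => ∑ t, phi (q t)) :=
    continuous_finset_sum _ fun t _ => continuous_phi.comp (continuous_apply t)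
  have h2 : Continuous (fun q : X × Y × Z → ℝ => ∑ b, phi (mY q b)) :=
    continuous_finset_sum _ fun b _ => continuous_phi.comp
      (continuous_finset_sum _ fun a _ => continuous_finset_sum _ fun c _ => continuous_apply _)
  have h3 : Continuous (fun q : X × Y × Z → ℝ => ∑ ab : X × Y, phi (mXY q ab)) :=
    continuous_finset_sum _ fun ab _ => continuous_phi.comp (continuous_mXY ab)
  have h4 : Continuous (fun q : X × Y × Z → ℝ => ∑ bc : Y × Z, phi (mYZ q bc)) :=
    continuous_finset_sum _ fun bc _ => continuous_phi.comp
      (continuous_finset_sum _ fun a _ => continuous_apply _)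
  exact ((h1.add h2).sub h3).sub h4

lemma isCompact_pmf {A : Type*} [Fintype A] : IsCompact {p : A → ℝ | IsPMF p} := by
  have hc : IsCompact (Set.pi Set.univ fun _ : A => Set.Icc (0:ℝ) 1) :=
    isCompact_univ_pi fun _ => isCompact_Icc
  apply hc.of_isClosed_subset
  · have h1 : IsClosed {p : A → ℝ | ∀ a, 0 ≤ p a} := by
      have he : {p : A → ℝ | ∀ a, 0 ≤ p a} = ⋂ a, {p : A → ℝ | 0 ≤ p a} := by ext p; simp
      rw [he]
      exact isClosed_iInter fun a => isClosed_le continuous_const (continuous_apply a)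
    have h2 : IsClosed {p : A → ℝ | ∑ a, p a = 1} :=
      isClosed_eq (continuous_finset_sum _ fun a _ => continuous_apply a) continuous_const
    have he : {p : A → ℝ | IsPMF p} = {p | ∀ a, 0 ≤ p a} ∩ {p | ∑ a, p a = 1} := rfl
    rw [he]; exact h1.inter h2
  · intro p hp a _
    refine ⟨hp.1 a, ?_⟩
    rw [← hp.2]
    exact Finset.single_le_sum (fun b _ => hp.1 b) (Finset.mem_univ a)

lemma key_delta (PY : Y → ℝ) (hPY : IsPMF PY) (W : Y → X → ℝ) (hW : IsCondPMF W)
    (d : X → Z → ℝ) (hd_zero : ∀ x, ∃ z, d x z = 0)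
    (D : ℝ) (ε : ℝ) (hε : 0 < ε) :
    ∃ δ1 > (0:ℝ), ∀ q : X × Y × Z → ℝ, IsPMF q →
      tvDist (mXY q) (fun ab : X × Y => PY ab.2 * W ab.2 ab.1) < δ1 →
      (∑ t, q t * d t.1 t.2.2) ≤ D →
      RYDF PY W d D - ε ≤ condMI q := by
  set Pxy : X × Y → ℝ := fun ab => PY ab.2 * W ab.2 ab.1 with hPxy_def
  by_contra hcon
  push_neg at hcon
  have hex : ∀ k : ℕ, ∃ q : X × Y × Z → ℝ, IsPMF q ∧
      tvDist (mXY q) Pxy < 1/((k:ℝ)+1) ∧ (∑ t, q t * d t.1 t.2.2) ≤ D ∧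
      condMI q < RYDF PY W d D - ε := by
    intro k
    obtain ⟨q, h1, h2, h3, h4⟩ := hcon (1/((k:ℝ)+1)) (by positivity)
    exact ⟨q, h1, h2, h3, h4⟩
  choose u hu1 hu2 hu3 hu4 using hex
  obtain ⟨qs, hqmem, φ, hφ, hconv⟩ := isCompact_pmf.tendsto_subseq (x := u) (fun k => hu1 k)
  have hq0 : ∀ t, 0 ≤ qs t := hqmem.1
  have hcont_tv : Continuous (fun q : X × Y × Z → ℝ => tvDist (mXY q) Pxy) := by
    unfold tvDist
    exact (continuous_finset_sum _ fun ab _ =>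
      ((continuous_mXY ab).sub continuous_const).abs).div_const 2
  have hcontE : Continuous (fun q : X × Y × Z → ℝ => ∑ t, q t * d t.1 t.2.2) :=
    continuous_finset_sum _ fun t _ => (continuous_apply t).mul continuous_const
  have htv0 : tvDist (mXY qs) Pxy ≤ 0 := by
    refine le_of_tendsto_of_tendsto' ((hcont_tv.tendsto qs).comp hconv)
      tendsto_one_div_add_atTop_nhds_zero_nat (fun k => ?_)
    refine le_trans (hu2 (φ k)).le ?_
    have : (k:ℝ) + 1 ≤ (φ k : ℝ) + 1 := by
      have : k ≤ φ k := hφ.le_apply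
      exact_mod_cast Nat.add_le_add_right this 1
    exact one_div_le_one_div_of_le (by positivity) this
  have hsum0 : ∑ ab : X × Y, |mXY qs ab - Pxy ab| = 0 := by
    have h1 : 0 ≤ ∑ ab : X × Y, |mXY qs ab - Pxy ab| :=
      Finset.sum_nonneg fun ab _ => abs_nonneg _
    have h2 := htv0
    unfold tvDist at h2
    linarith
  have hmarg : ∀ ab : X × Y, mXY qs ab = Pxy ab := by
    intro ab
    have h := (Finset.sum_eq_zero_iff_of_nonneg (fun ab _ => abs_nonneg _)).mp hsum0 ab
      (Finset.mem_univ ab)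
    have := abs_eq_zero.mp h
    linarith
  have hED : (∑ t, qs t * d t.1 t.2.2) ≤ D :=
    le_of_tendsto ((hcontE.tendsto qs).comp hconv) (Filter.Eventually.of_forall fun k => hu3 (φ k))
  have hMI : condMI qs ≤ RYDF PY W d D - ε := by
    have h1 : condMI qs = Phi qs := condMI_eq_Phi qs hq0
    have h2 : Filter.Tendsto (fun k => Phi (u (φ k))) atTop (nhds (Phi qs)) :=
      (continuous_Phi.tendsto qs).comp hconv
    rw [h1]
    refine le_of_tendsto h2 (Filter.Eventually.of_forall fun k => ?_)
    rw [← condMI_eq_Phi (u (φ k)) (hu1 (φ k)).1]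
    exact (hu4 (φ k)).le
  choose z0 hz0 using hd_zero
  set V : X × Y → Z → ℝ := fun ab c =>
    if 0 < mXY qs ab then qs (ab.1, ab.2, c) / mXY qs ab else (if c = z0 ab.1 then 1 else 0)
    with hV_def
  have hVpmf : IsCondPMF V := by
    intro ab
    by_cases h : 0 < mXY qs ab
    · constructor
      · intro c
        simp only [hV_def, if_pos h]
        exact div_nonneg (hq0 _) h.le
      · simp only [hV_def, if_pos h]
        rw [← Finset.sum_div]
        exact div_self h.ne'
    · constructor
      · intro c
        simp only [hV_def, if_neg h]
        split <;> norm_num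
      · simp only [hV_def, if_neg h]
        simp
  have hclaim : ∀ t : X × Y × Z, PY t.2.1 * W t.2.1 t.1 * V (t.1, t.2.1) t.2.2 = qs t := by
    intro t
    have hPW : PY t.2.1 * W t.2.1 t.1 = mXY qs (t.1, t.2.1) := (hmarg (t.1, t.2.1)).symm
    by_cases h : 0 < mXY qs (t.1, t.2.1)
    · rw [hPW]
      simp only [hV_def, if_pos h]
      rw [← mul_div_assoc, mul_div_cancel_left₀ _ h.ne']
    · have hm0 : mXY qs (t.1, t.2.1) = 0 := le_antisymm (not_lt.mp h) (mXY_nonneg qs hq0 _)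
      have hqt0 : qs t = 0 := le_antisymm (hm0 ▸ le_mXY qs hq0 t) (hq0 t)
      rw [hPW, hm0, hqt0, zero_mul]
  have hmem : condMI qs ∈ { r | ∃ V' : X × Y → Z → ℝ, IsCondPMF V' ∧
      (∑ x, ∑ y, ∑ z, PY y * W y x * V' (x, y) z * d x z) ≤ D ∧
      r = condMI (fun t : X × Y × Z => PY t.2.1 * W t.2.1 t.1 * V' (t.1, t.2.1) t.2.2) } := by
    refine ⟨V, hVpmf, ?_, ?_⟩
    · calc ∑ x, ∑ y, ∑ z', PY y * W y x * V (x, y) z' * d x z'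
          = ∑ x, ∑ y, ∑ z', qs (x, y, z') * d x z' := by
            refine Finset.sum_congr rfl fun x _ => Finset.sum_congr rfl fun y _ =>
              Finset.sum_congr rfl fun z' _ => ?_
            rw [show PY y * W y x * V (x, y) z' = qs (x, y, z') from hclaim (x, y, z')]
        _ = ∑ t : X × Y × Z, qs t * d t.1 t.2.2 :=
            (sum3 (fun t : X × Y × Z => qs t * d t.1 t.2.2)).symm
        _ ≤ D := hED
    · exact (congrArg condMI (funext hclaim)).symm
  have hbdd : BddBelow { r | ∃ V' : X × Y → Z → ℝ, IsCondPMF V' ∧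
      (∑ x, ∑ y, ∑ z, PY y * W y x * V' (x, y) z * d x z) ≤ D ∧
      r = condMI (fun t : X × Y × Z => PY t.2.1 * W t.2.1 t.1 * V' (t.1, t.2.1) t.2.2) } := by
    refine ⟨0, fun r hr => ?_⟩
    obtain ⟨V', hV', _, rfl⟩ := hr
    refine condMI_nonneg _ ⟨?_, ?_⟩
    · intro t
      exact mul_nonneg (mul_nonneg (hPY.1 _) ((hW _).1 _)) ((hV' _).1 _)
    · rw [sum3 (fun t : X × Y × Z => PY t.2.1 * W t.2.1 t.1 * V' (t.1, t.2.1) t.2.2)]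
      have hc : ∀ (a : X) (b : Y), ∑ c, PY b * W b a * V' (a, b) c = PY b * W b a := by
        intro a b
        rw [← Finset.mul_sum, (hV' (a, b)).2, mul_one]
      calc ∑ a, ∑ b, ∑ c, PY b * W b a * V' (a, b) c
          = ∑ a, ∑ b, PY b * W b a :=
            Finset.sum_congr rfl fun a _ => Finset.sum_congr rfl fun b _ => hc a b
        _ = ∑ b, ∑ a, PY b * W b a := Finset.sum_comm
        _ = ∑ b, PY b := by
            refine Finset.sum_congr rfl fun b _ => ?_
            rw [← Finset.mul_sum, (hW b).2, mul_one]
        _ = 1 := hPY.2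
  have hfin : RYDF PY W d D ≤ condMI qs := by
    unfold RYDF
    exact csInf_le hbdd hmem
  linarith

lemma cardFilter_congr {α : Type*} (s : Finset α) (p : α → Prop) (h1 : DecidablePred p) :
    (@Finset.filter α p h1 s).card = (@Finset.filter α p (Classical.decPred p) s).card := by
  have he : h1 = Classical.decPred p := by
    funext a
    exact Subsingleton.elim _ _
  rw [he]

lemma sum_comp_w {A : Type*} [Fintype A] [DecidableEq A] {n : ℕ} (w : Fin n → A) (f : A → ℝ) :
    ∑ i, f (w i) = ∑ t : A, ((Finset.univ.filter (fun i => w i = t)).card : ℝ) * f t := by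
  rw [← Finset.sum_fiberwise_of_maps_to (g := w) (fun i _ => Finset.mem_univ (w i))
    (fun i => f (w i))]
  refine Finset.sum_congr rfl fun t _ => ?_
  rw [Finset.sum_congr rfl (fun i hi => by
      rw [(Finset.mem_filter.mp hi).2] : ∀ i ∈ Finset.univ.filter (fun i => w i = t),
        f (w i) = f t),
    Finset.sum_const, nsmul_eq_mul]

lemma chain (hq : IsPMF q) (W : Y → X → ℝ) (hW : IsCondPMF W)
    (hWpos : ∀ t, 0 < q t → 0 < W t.2.1 t.1) :
    ∑ t, q t * Real.logb 2 (W t.2.1 t.1)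
      ≤ -condMI q + ∑ t, q t * Real.logb 2 (q t / mYZ q (t.2.1, t.2.2)) := by
  have h0 := hq.1
  have key : ∑ t, q t * Real.logb 2 (W t.2.1 t.1)
      + ∑ t, q t * Real.logb 2
          (q t * mY q t.2.1 / (mXY q (t.1, t.2.1) * mYZ q (t.2.1, t.2.2)))
      - ∑ t, q t * Real.logb 2 (q t / mYZ q (t.2.1, t.2.2))
      = ∑ ab : X × Y, mXY q ab * Real.logb 2 (W ab.2 ab.1 * mY q ab.2 / mXY q ab) := by
    rw [← Finset.sum_add_distrib, ← Finset.sum_sub_distrib,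
      ← sum_mul_comp_XY q (fun ab => Real.logb 2 (W ab.2 ab.1 * mY q ab.2 / mXY q ab))]
    refine Finset.sum_congr rfl fun t _ => ?_
    rcases eq_or_lt_of_le (h0 t) with h | h
    · simp [← h]
    · have hW' := hWpos t h
      have hmxy : 0 < mXY q (t.1, t.2.1) := lt_of_lt_of_le h (le_mXY q h0 t)
      have hmyz : 0 < mYZ q (t.2.1, t.2.2) := lt_of_lt_of_le h (le_mYZ q h0 t)
      have hmy : 0 < mY q t.2.1 := lt_of_lt_of_le hmxy (mXY_le_mY q h0 _ _)
      have e1 : Real.logb 2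
          (q t * mY q t.2.1 / (mXY q (t.1, t.2.1) * mYZ q (t.2.1, t.2.2)))
          = Real.logb 2 (q t) + Real.logb 2 (mY q t.2.1)
            - (Real.logb 2 (mXY q (t.1, t.2.1)) + Real.logb 2 (mYZ q (t.2.1, t.2.2))) := by
        rw [Real.logb_div (by positivity) (by positivity), Real.logb_mul h.ne' hmy.ne',
          Real.logb_mul hmxy.ne' hmyz.ne']
      have e2 : Real.logb 2 (q t / mYZ q (t.2.1, t.2.2))
          = Real.logb 2 (q t) - Real.logb 2 (mYZ q (t.2.1, t.2.2)) :=
        Real.logb_div h.ne' hmyz.ne'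
      have e3 : Real.logb 2 (W t.2.1 t.1 * mY q t.2.1 / mXY q (t.1, t.2.1))
          = Real.logb 2 (W t.2.1 t.1) + Real.logb 2 (mY q t.2.1)
            - Real.logb 2 (mXY q (t.1, t.2.1)) := by
        rw [Real.logb_div (by positivity) hmxy.ne', Real.logb_mul hW'.ne' hmy.ne']
      rw [e1, e2, e3]
      ring
  have hg : ∑ ab : X × Y, mXY q ab * Real.logb 2 (W ab.2 ab.1 * mY q ab.2 / mXY q ab) ≤ 0 := by
    refine gibbs (mXY q) (fun ab => W ab.2 ab.1 * mY q ab.2) (mXY_nonneg q h0)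
      (fun ab => mul_nonneg ((hW _).1 _) (mY_nonneg q h0 _)) ?_ ?_
    · intro ab hab
      obtain ⟨c, hc⟩ : ∃ c, 0 < q (ab.1, ab.2, c) := by
        by_contra hno
        push_neg at hno
        have hz : mXY q ab = 0 := Finset.sum_eq_zero fun c _ => le_antisymm (hno c) (h0 _)
        rw [hz] at hab
        exact lt_irrefl 0 hab
      have hWp : 0 < W ab.2 ab.1 := hWpos (ab.1, ab.2, c) hc
      have hmyp : 0 < mY q ab.2 := lt_of_lt_of_le hc
        (le_trans (le_mXY q h0 (ab.1, ab.2, c)) (mXY_le_mY q h0 ab.1 ab.2))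
      exact mul_pos hWp hmyp
    · have h1 : ∑ ab : X × Y, (if 0 < mXY q ab then W ab.2 ab.1 * mY q ab.2 else 0)
          ≤ ∑ ab : X × Y, W ab.2 ab.1 * mY q ab.2 := by
        refine Finset.sum_le_sum fun ab _ => ?_
        by_cases hab : 0 < mXY q ab
        · rw [if_pos hab]
        · rw [if_neg hab]
          exact mul_nonneg ((hW _).1 _) (mY_nonneg q h0 _)
      have h2 : ∑ ab : X × Y, W ab.2 ab.1 * mY q ab.2 = 1 := by
        rw [Fintype.sum_prod_type (f := fun ab : X × Y => W ab.2 ab.1 * mY q ab.2),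
          Finset.sum_comm]
        calc ∑ b, ∑ a, W b a * mY q b = ∑ b, mY q b := by
              refine Finset.sum_congr rfl fun b _ => ?_
              rw [← Finset.sum_mul, (hW b).2, one_mul]
          _ = 1 := sum_mY q hq
      have h3 : ∑ ab : X × Y, mXY q ab = 1 := by rw [sum_mXY, hq.2]
      rw [h3]
      linarith
  have hmid : ∑ t, q t * Real.logb 2
      (q t * mY q t.2.1 / (mXY q (t.1, t.2.1) * mYZ q (t.2.1, t.2.2))) = condMI q :=
    (condMI_def q).symm
  linarith

lemma per_x_bound {n : ℕ} (hn : 0 < n) (hq : IsPMF q)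
    (W : Y → X → ℝ) (hW : IsCondPMF W)
    (x : Fin n → X) (y : Fin n → Y) (z : Fin n → Z)
    (hcnt : ∀ t : X × Y × Z,
      (((Finset.univ.filter (fun i => (x i, y i, z i) = t)).card : ℝ)) = n * q t) :
    ∏ i, W (y i) (x i)
      ≤ (2:ℝ) ^ (-(n:ℝ) * condMI q) * ∏ i, (q (x i, y i, z i) / mYZ q (y i, z i)) := by
  have h0 := hq.1
  by_cases hWx : ∀ i, 0 < W (y i) (x i)
  case neg =>
    have hprod0 : ∏ i, W (y i) (x i) = 0 := by
      push_neg at hWx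
      obtain ⟨i, hi⟩ := hWx
      exact Finset.prod_eq_zero (Finset.mem_univ i) (le_antisymm hi ((hW _).1 _))
    rw [hprod0]
    have : (0:ℝ) ≤ ∏ i, (q (x i, y i, z i) / mYZ q (y i, z i)) :=
      Finset.prod_nonneg fun i _ => div_nonneg (h0 _) (mYZ_nonneg q h0 _)
    positivity
  case pos =>
    have hQpos : ∀ i, 0 < q (x i, y i, z i) := by
      intro i
      have hmem : i ∈ Finset.univ.filter (fun j => (x j, y j, z j) = (x i, y i, z i)) :=
        Finset.mem_filter.mpr ⟨Finset.mem_univ i, rfl⟩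
      have hcard : 0 < ((Finset.univ.filter
          (fun j => (x j, y j, z j) = (x i, y i, z i))).card : ℝ) := by
        have := Finset.card_pos.mpr ⟨i, hmem⟩
        exact_mod_cast this
      rw [hcnt (x i, y i, z i)] at hcard
      rcases eq_or_lt_of_le (h0 (x i, y i, z i)) with h | h
      · rw [← h, mul_zero] at hcard
        exact absurd hcard (lt_irrefl 0)
      · exact h
    have hn' : (0:ℝ) < n := by exact_mod_cast hn
    have hWpos : ∀ t, 0 < q t → 0 < W t.2.1 t.1 := by
      intro t ht
      have hcard : 0 < ((Finset.univ.filter (fun j => (x j, y j, z j) = t)).card : ℝ) := by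
        rw [hcnt t]
        exact mul_pos hn' ht
      have hcard' : 0 < (Finset.univ.filter (fun j => (x j, y j, z j) = t)).card := by
        exact_mod_cast hcard
      obtain ⟨i, hi⟩ := Finset.card_pos.mp hcard'
      have hit := (Finset.mem_filter.mp hi).2
      have hWt : W t.2.1 t.1 = W (y i) (x i) := by rw [← hit]
      rw [hWt]
      exact hWx i
    have hmYZ : ∀ i, 0 < mYZ q (y i, z i) := fun i =>
      lt_of_lt_of_le (hQpos i) (le_mYZ q h0 (x i, y i, z i))
    have hSpos : ∀ i, 0 < q (x i, y i, z i) / mYZ q (y i, z i) :=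
      fun i => div_pos (hQpos i) (hmYZ i)
    have hL : 0 < ∏ i, W (y i) (x i) := Finset.prod_pos fun i _ => hWx i
    have hRp : 0 < ∏ i, (q (x i, y i, z i) / mYZ q (y i, z i)) :=
      Finset.prod_pos fun i _ => hSpos i
    have hpow : (0:ℝ) < (2:ℝ) ^ (-(n:ℝ) * condMI q) := Real.rpow_pos_of_pos two_pos _
    have hlogprod : ∀ (f : Fin n → ℝ), (∀ i, 0 < f i) →
        Real.logb 2 (∏ i, f i) = ∑ i, Real.logb 2 (f i) := by
      intro f hf
      rw [Real.logb, Real.log_prod (fun i _ => (hf i).ne'), Finset.sum_div]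
      rfl
    have hgroup : ∀ f : X × Y × Z → ℝ,
        ∑ i, f (x i, y i, z i) = (n:ℝ) * ∑ t, q t * f t := by
      intro f
      rw [Finset.mul_sum, sum_comp_w (fun i => (x i, y i, z i)) f]
      refine Finset.sum_congr rfl fun t _ => ?_
      rw [hcnt t]
      ring
    have hchain := chain q hq W hW hWpos
    have hlogs : Real.logb 2 (∏ i, W (y i) (x i))
        ≤ Real.logb 2 ((2:ℝ) ^ (-(n:ℝ) * condMI q)
            * ∏ i, (q (x i, y i, z i) / mYZ q (y i, z i))) := by
      rw [hlogprod _ hWx, Real.logb_mul hpow.ne' hRp.ne', hlogprod _ hSpos,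
        Real.logb_rpow (by norm_num) (by norm_num)]
      have e1 : ∑ i, Real.logb 2 (W (y i) (x i))
          = (n:ℝ) * ∑ t, q t * Real.logb 2 (W t.2.1 t.1) :=
        hgroup (fun t => Real.logb 2 (W t.2.1 t.1))
      have e2 : ∑ i, Real.logb 2 (q (x i, y i, z i) / mYZ q (y i, z i))
          = (n:ℝ) * ∑ t, q t * Real.logb 2 (q t / mYZ q (t.2.1, t.2.2)) :=
        hgroup (fun t => Real.logb 2 (q t / mYZ q (t.2.1, t.2.2)))
      rw [e1, e2]
      have hmul := mul_le_mul_of_nonneg_left hchain hn'.le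
      nlinarith [hmul]
    calc ∏ i, W (y i) (x i) = (2:ℝ) ^ Real.logb 2 (∏ i, W (y i) (x i)) :=
          (Real.rpow_logb two_pos (by norm_num) hL).symm
      _ ≤ (2:ℝ) ^ Real.logb 2 ((2:ℝ) ^ (-(n:ℝ) * condMI q)
            * ∏ i, (q (x i, y i, z i) / mYZ q (y i, z i))) :=
          Real.rpow_le_rpow_of_exponent_le one_le_two hlogs
      _ = _ := Real.rpow_logb two_pos (by norm_num) (mul_pos hpow hRp)

lemma exists_n0 (K : ℕ) (c : ℝ) (hc : 0 < c) :
    ∃ n0 : ℕ, 1 ≤ n0 ∧ ∀ n : ℕ, n0 ≤ n → ((n:ℝ) + 1) ^ K ≤ (2:ℝ) ^ ((n:ℝ) * c) := by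
  have hlog2 : (0:ℝ) < Real.log 2 := Real.log_pos one_lt_two
  set B : ℝ := (4 * K / (c * Real.log 2)) ^ 2 + 1 with hB
  refine ⟨⌈B⌉₊ + 1, Nat.le_add_left 1 _, ?_⟩
  intro n hn
  have hnB : B ≤ (n:ℝ) := by
    have h1 : (⌈B⌉₊ : ℝ) ≤ (n:ℝ) := by
      exact_mod_cast le_trans (Nat.le_succ _) hn
    exact le_trans (Nat.le_ceil B) h1
  have hn1 : (1:ℝ) ≤ (n:ℝ) := by
    have hsq : (0:ℝ) ≤ (4 * K / (c * Real.log 2)) ^ 2 := sq_nonneg _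
    rw [hB] at hnB
    linarith
  have hnpos : (0:ℝ) < n := by linarith
  set s := Real.sqrt n with hs
  have hs_sq : s * s = n := Real.mul_self_sqrt hnpos.le
  have hs_nonneg : 0 ≤ s := Real.sqrt_nonneg _
  have hs_ge : 4 * (K:ℝ) ≤ c * Real.log 2 * s := by
    have h1 : Real.sqrt ((4 * K / (c * Real.log 2)) ^ 2) ≤ s := by
      apply Real.sqrt_le_sqrt
      rw [hB] at hnB
      linarith
    have h2 : Real.sqrt ((4 * K / (c * Real.log 2)) ^ 2) = 4 * K / (c * Real.log 2) := by
      rw [Real.sqrt_sq (by positivity)]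
    rw [h2] at h1
    have h3 := (div_le_iff₀ (by positivity : (0:ℝ) < c * Real.log 2)).mp h1
    linarith
  have hlogn : Real.log ((n:ℝ) + 1) ≤ 4 * s := by
    have e1 : Real.log ((n:ℝ) + 1) = 2 * Real.log (Real.sqrt ((n:ℝ) + 1)) := by
      rw [Real.log_sqrt (by positivity)]
      ring
    have e2 : Real.log (Real.sqrt ((n:ℝ) + 1)) ≤ Real.sqrt ((n:ℝ) + 1) - 1 :=
      Real.log_le_sub_one_of_pos (Real.sqrt_pos.mpr (by positivity))
    have e3 : Real.sqrt ((n:ℝ) + 1) ≤ 2 * s := by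
      have h4 : ((n:ℝ) + 1) ≤ 4 * (n:ℝ) := by linarith
      have h5 := Real.sqrt_le_sqrt h4
      have h6 : Real.sqrt (4 * (n:ℝ)) = 2 * s := by
        rw [show (4:ℝ) * (n:ℝ) = 2 ^ 2 * (n:ℝ) by ring,
          Real.sqrt_mul (by positivity) _, Real.sqrt_sq (by norm_num : (0:ℝ) ≤ 2)]
      rw [h6] at h5
      exact h5
    linarith
  have hmain : (K:ℝ) * Real.log ((n:ℝ) + 1) ≤ Real.log 2 * ((n:ℝ) * c) := by
    have h1 : (K:ℝ) * Real.log ((n:ℝ) + 1) ≤ (K:ℝ) * (4 * s) :=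
      mul_le_mul_of_nonneg_left hlogn (Nat.cast_nonneg K)
    have h3 := mul_le_mul_of_nonneg_right hs_ge hs_nonneg
    have h4 : c * Real.log 2 * s * s = Real.log 2 * ((n:ℝ) * c) := by
      rw [show c * Real.log 2 * s * s = c * Real.log 2 * (s * s) by ring, hs_sq]
      ring
    linarith
  have elhs : ((n:ℝ) + 1) ^ K = Real.exp ((K:ℝ) * Real.log ((n:ℝ) + 1)) := by
    rw [← Real.log_pow, Real.exp_log (by positivity)]
  have erhs : (2:ℝ) ^ ((n:ℝ) * c) = Real.exp (Real.log 2 * ((n:ℝ) * c)) :=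
    Real.rpow_def_of_pos two_pos _
  rw [elhs, erhs]
  exact Real.exp_le_exp.mpr hmain

end TBSI

set_option maxHeartbeats 1600000 in
/-- **Lemma (type bound with side information).** For `X^n` distributed according to
`∏ᵢ P_{X|Y=yᵢ}` and any `z^n`:
`P[d(X^n,z^n) ≤ D, (X^n,y^n) ∈ 𝒯_δ^n(X,Y)] ≤ 2^{-n(R_Y(D) - ε)}` for small enough `δ`
and large enough `n`, uniformly in `y^n` and `z^n`. -/
theorem type_bound_side_info
    {X Y Z : Type*} [Fintype X] [Fintype Y] [Fintype Z]
    [Nonempty X] [Nonempty Y] [Nonempty Z]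
    (PY : Y → ℝ) (hPY : IsPMF PY)
    (W : Y → X → ℝ) (hW : IsCondPMF W)
    (d : X → Z → ℝ) (hd_nonneg : ∀ x z, 0 ≤ d x z) (hd_zero : ∀ x, ∃ z, d x z = 0)
    (D : ℝ) :
    ∀ ε > (0:ℝ), ∃ δ0 > (0:ℝ), ∃ n0 : ℕ,
      ∀ δ : ℝ, 0 < δ → δ ≤ δ0 → ∀ n ≥ n0, ∀ y : Fin n → Y, ∀ z : Fin n → Z,
        (∑ x : Fin n → X, (∏ i, W (y i) (x i)) *
            (if dseq d x z ≤ D ∧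
                tvDist (jointType x y) (fun ab : X × Y => PY ab.2 * W ab.2 ab.1) < δ
              then (1:ℝ) else 0))
          ≤ 2 ^ (-(n : ℝ) * (RYDF PY W d D - ε)) := by
  intro ε hε
  obtain ⟨δ1, hδ1, hkey⟩ := TBSI.key_delta PY hPY W hW d hd_zero D (ε/2) (by linarith)
  obtain ⟨n1, hn11, hn1le⟩ := TBSI.exists_n0 (Fintype.card (X × Y × Z)) (ε/2) (by linarith)
  refine ⟨δ1, hδ1, n1, ?_⟩
  intro δ hδpos hδle n hn y z
  have hn0 : 0 < n := Nat.lt_of_lt_of_le hn11 hn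
  have hnR : (0:ℝ) < n := by exact_mod_cast hn0
  set Pxy : X × Y → ℝ := fun ab => PY ab.2 * W ab.2 ab.1 with hPxy
  set R := RYDF PY W d D with hRdef
  set cnt : (Fin n → X) → (X × Y × Z) → ℕ :=
    fun x t => (Finset.univ.filter (fun i => (x i, y i, z i) = t)).card with hcntdef
  have hcnt_lt : ∀ x t, cnt x t < n + 1 := by
    intro x t
    exact Nat.lt_succ_of_le (le_trans (Finset.card_filter_le _ _) (le_of_eq (by simp)))
  set τ : (Fin n → X) → ((X × Y × Z) → Fin (n + 1)) := fun x t => ⟨cnt x t, hcnt_lt x t⟩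
    with hτdef
  have hsplit : (∑ x : Fin n → X, (∏ i, W (y i) (x i)) *
        (if dseq d x z ≤ D ∧ tvDist (jointType x y) Pxy < δ then (1:ℝ) else 0))
      = ∑ m : (X × Y × Z) → Fin (n + 1), ∑ x ∈ Finset.univ.filter (fun x => τ x = m),
          (∏ i, W (y i) (x i)) *
            (if dseq d x z ≤ D ∧ tvDist (jointType x y) Pxy < δ then (1:ℝ) else 0) :=
    (Finset.sum_fiberwise_of_maps_to (fun x _ => Finset.mem_univ (τ x)) _).symm
  rw [hsplit]
  have hfiber : ∀ m : (X × Y × Z) → Fin (n + 1),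
      (∑ x ∈ Finset.univ.filter (fun x => τ x = m),
        (∏ i, W (y i) (x i)) *
          (if dseq d x z ≤ D ∧ tvDist (jointType x y) Pxy < δ then (1:ℝ) else 0))
      ≤ (2:ℝ) ^ (-(n:ℝ) * (R - ε/2)) := by
    intro m
    have hCb : (0:ℝ) < (2:ℝ) ^ (-(n:ℝ) * (R - ε/2)) := Real.rpow_pos_of_pos two_pos _
    by_cases hwit : ∃ x₀, τ x₀ = m ∧
        (dseq d x₀ z ≤ D ∧ tvDist (jointType x₀ y) Pxy < δ) ∧ 0 < ∏ i, W (y i) (x₀ i)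
    case neg =>
      have hzero : ∀ x ∈ Finset.univ.filter (fun x => τ x = m),
          (∏ i, W (y i) (x i)) *
            (if dseq d x z ≤ D ∧ tvDist (jointType x y) Pxy < δ then (1:ℝ) else 0) = 0 := by
        intro x hx
        have hxm := (Finset.mem_filter.mp hx).2
        by_cases hc : dseq d x z ≤ D ∧ tvDist (jointType x y) Pxy < δ
        · have hP : ¬ (0 < ∏ i, W (y i) (x i)) := fun hp => hwit ⟨x, hxm, hc, hp⟩
          have h00 : ∏ i, W (y i) (x i) = 0 :=
            le_antisymm (not_lt.mp hP) (Finset.prod_nonneg fun i _ => (hW _).1 _)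
          rw [h00, zero_mul]
        · rw [if_neg hc, mul_zero]
      rw [Finset.sum_eq_zero hzero]
      exact hCb.le
    case pos =>
      obtain ⟨x₀, hx₀m, hx₀c, hx₀p⟩ := hwit
      set q : X × Y × Z → ℝ := fun t => (cnt x₀ t : ℝ) / n with hqdef
      have hq0 : ∀ t, 0 ≤ q t := fun t => by positivity
      have hgen : ∀ f : X × Y × Z → ℝ,
          ∑ t, (cnt x₀ t : ℝ) * f t = ∑ i, f (x₀ i, y i, z i) :=
        fun f => (TBSI.sum_comp_w (fun i => (x₀ i, y i, z i)) f).symm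
      have hsum_cnt : ∑ t, (cnt x₀ t : ℝ) = n := by
        have h1 : ∑ t, (cnt x₀ t : ℝ) * (1:ℝ) = ∑ i : Fin n, (1:ℝ) := hgen (fun _ => 1)
        simpa using h1
      have hqpmf : IsPMF q := by
        refine ⟨hq0, ?_⟩
        have : ∑ t, q t = (∑ t, (cnt x₀ t : ℝ)) / n := by
          rw [Finset.sum_div]
        rw [this, hsum_cnt, div_self hnR.ne']
      have hcnt_fiber : ∀ x', τ x' = m → ∀ t, cnt x' t = cnt x₀ t := by
        intro x' hx' t
        have h1 : τ x' t = τ x₀ t := by rw [hx', hx₀m]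
        exact congrArg Fin.val h1
      have hQ0pos : ∀ i, 0 < q (x₀ i, y i, z i) := by
        intro i
        have hmem : i ∈ Finset.univ.filter (fun j => (x₀ j, y j, z j) = (x₀ i, y i, z i)) :=
          Finset.mem_filter.mpr ⟨Finset.mem_univ i, rfl⟩
        have h1 : 0 < cnt x₀ (x₀ i, y i, z i) := Finset.card_pos.mpr ⟨i, hmem⟩
        have h2 : (0:ℝ) < (cnt x₀ (x₀ i, y i, z i) : ℝ) := by exact_mod_cast h1
        exact div_pos h2 hnR
      have hmYZpos : ∀ i, 0 < TBSI.mYZ q (y i, z i) := fun i =>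
        lt_of_lt_of_le (hQ0pos i) (TBSI.le_mYZ q hq0 (x₀ i, y i, z i))
      have hmarg : TBSI.mXY q = jointType x₀ y := by
        funext ab
        have hNat : ∑ c, cnt x₀ (ab.1, ab.2, c)
            = (Finset.univ.filter (fun i => x₀ i = ab.1 ∧ y i = ab.2)).card := by
          rw [Finset.card_eq_sum_card_fiberwise (f := fun i => z i) (t := Finset.univ)
            (fun i _ => Finset.mem_univ _)]
          refine Finset.sum_congr rfl fun c _ => ?_
          have hset : Finset.univ.filter (fun i => (x₀ i, y i, z i) = (ab.1, ab.2, c))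
              = (Finset.univ.filter (fun i => x₀ i = ab.1 ∧ y i = ab.2)).filter
                  (fun i => z i = c) := by
            ext i
            simp [Prod.ext_iff, and_assoc]
          show (Finset.univ.filter (fun i => (x₀ i, y i, z i) = (ab.1, ab.2, c))).card
              = ((Finset.univ.filter (fun i => x₀ i = ab.1 ∧ y i = ab.2)).filter
                  (fun i => z i = c)).card
          rw [hset]
        have hmq : TBSI.mXY q ab = (∑ c, (cnt x₀ (ab.1, ab.2, c) : ℝ)) / n := by
          rw [show TBSI.mXY q ab = ∑ c, q (ab.1, ab.2, c) from rfl, Finset.sum_div]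
        have hjt : jointType x₀ y ab
            = ((Finset.univ.filter (fun i => x₀ i = ab.1 ∧ y i = ab.2)).card : ℝ) / n := rfl
        rw [hmq, hjt]
        congr 1
        exact_mod_cast hNat
      have hE : (∑ t, q t * d t.1 t.2.2) = dseq d x₀ z := by
        have h1 : ∑ t, (cnt x₀ t : ℝ) * d t.1 t.2.2 = ∑ i, d (x₀ i) (z i) :=
          hgen (fun t => d t.1 t.2.2)
        rw [dseq, ← h1, Finset.sum_div]
        refine Finset.sum_congr rfl fun t _ => ?_
        show (cnt x₀ t : ℝ) / (n:ℝ) * d t.1 t.2.2 = (cnt x₀ t : ℝ) * d t.1 t.2.2 / (n:ℝ)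
        ring
      have hqE : (∑ t, q t * d t.1 t.2.2) ≤ D := by
        rw [hE]
        exact hx₀c.1
      have hqtv : tvDist (TBSI.mXY q) Pxy < δ1 := by
        rw [hmarg]
        exact lt_of_lt_of_le hx₀c.2 hδle
      have hqMI : R - ε/2 ≤ condMI q := hkey q hqpmf hqtv hqE
      have hperx : ∀ x' ∈ Finset.univ.filter (fun x' => τ x' = m),
          (∏ i, W (y i) (x' i)) *
            (if dseq d x' z ≤ D ∧ tvDist (jointType x' y) Pxy < δ then (1:ℝ) else 0)
          ≤ (2:ℝ) ^ (-(n:ℝ) * condMI q)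
              * ∏ i, (q (x' i, y i, z i) / TBSI.mYZ q (y i, z i)) := by
        intro x' hx'
        have hxm := (Finset.mem_filter.mp hx').2
        have hc : ∀ t : X × Y × Z,
            ((Finset.univ.filter (fun i => (x' i, y i, z i) = t)).card : ℝ) = n * q t := by
          intro t
          have h1 : cnt x' t = cnt x₀ t := hcnt_fiber x' hxm t
          show ((cnt x' t : ℝ)) = (n:ℝ) * q t
          rw [h1]
          show (cnt x₀ t : ℝ) = (n:ℝ) * ((cnt x₀ t : ℝ) / n)
          field_simp
        have hb := TBSI.per_x_bound (q := q) hn0 hqpmf W hW x' y z hc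
        calc (∏ i, W (y i) (x' i)) *
              (if dseq d x' z ≤ D ∧ tvDist (jointType x' y) Pxy < δ then (1:ℝ) else 0)
            ≤ (∏ i, W (y i) (x' i)) * 1 := by
              apply mul_le_mul_of_nonneg_left _ (Finset.prod_nonneg fun i _ => (hW _).1 _)
              split <;> norm_num
          _ = ∏ i, W (y i) (x' i) := mul_one _
          _ ≤ _ := hb
      have hsum_all : ∑ x' : Fin n → X,
          ∏ i, (q (x' i, y i, z i) / TBSI.mYZ q (y i, z i)) = 1 := by
        have h1 : ∑ x' ∈ Fintype.piFinset (fun _ : Fin n => (Finset.univ : Finset X)),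
            ∏ i, (q (x' i, y i, z i) / TBSI.mYZ q (y i, z i))
            = ∏ i, ∑ a, (q (a, y i, z i) / TBSI.mYZ q (y i, z i)) :=
          (Finset.prod_univ_sum (fun _ : Fin n => (Finset.univ : Finset X))
            (fun i a => q (a, y i, z i) / TBSI.mYZ q (y i, z i))).symm
        rw [Fintype.piFinset_univ] at h1
        rw [h1, Finset.prod_eq_one]
        intro i _
        rw [← Finset.sum_div]
        have h2 : ∑ a, q (a, y i, z i) = TBSI.mYZ q (y i, z i) := rfl
        rw [h2, div_self (hmYZpos i).ne']
      calc ∑ x' ∈ Finset.univ.filter (fun x' => τ x' = m),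
            (∏ i, W (y i) (x' i)) *
              (if dseq d x' z ≤ D ∧ tvDist (jointType x' y) Pxy < δ then (1:ℝ) else 0)
          ≤ ∑ x' ∈ Finset.univ.filter (fun x' => τ x' = m),
              (2:ℝ) ^ (-(n:ℝ) * condMI q)
                * ∏ i, (q (x' i, y i, z i) / TBSI.mYZ q (y i, z i)) :=
            Finset.sum_le_sum hperx
        _ ≤ ∑ x' : Fin n → X, (2:ℝ) ^ (-(n:ℝ) * condMI q)
                * ∏ i, (q (x' i, y i, z i) / TBSI.mYZ q (y i, z i)) := by
            apply Finset.sum_le_sum_of_subset_of_nonneg (Finset.filter_subset _ _)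
            intro x' _ _
            exact mul_nonneg (Real.rpow_pos_of_pos two_pos _).le
              (Finset.prod_nonneg fun i _ => div_nonneg (hq0 _) (TBSI.mYZ_nonneg q hq0 _))
        _ = (2:ℝ) ^ (-(n:ℝ) * condMI q) := by
            rw [← Finset.mul_sum, hsum_all, mul_one]
        _ ≤ (2:ℝ) ^ (-(n:ℝ) * (R - ε/2)) := by
            apply Real.rpow_le_rpow_of_exponent_le one_le_two
            nlinarith [mul_le_mul_of_nonneg_left hqMI hnR.le]
  calc ∑ m : (X × Y × Z) → Fin (n + 1), ∑ x ∈ Finset.univ.filter (fun x => τ x = m),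
        (∏ i, W (y i) (x i)) *
          (if dseq d x z ≤ D ∧ tvDist (jointType x y) Pxy < δ then (1:ℝ) else 0)
      ≤ ∑ _m : (X × Y × Z) → Fin (n + 1), (2:ℝ) ^ (-(n:ℝ) * (R - ε/2)) :=
        Finset.sum_le_sum fun m _ => hfiber m
    _ = (Fintype.card ((X × Y × Z) → Fin (n + 1)) : ℝ) * (2:ℝ) ^ (-(n:ℝ) * (R - ε/2)) := by
        rw [Finset.sum_const, nsmul_eq_mul, Finset.card_univ]
    _ ≤ (2:ℝ) ^ ((n:ℝ) * (ε/2)) * (2:ℝ) ^ (-(n:ℝ) * (R - ε/2)) := by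
        apply mul_le_mul_of_nonneg_right _ (Real.rpow_pos_of_pos two_pos _).le
        have hcard : (Fintype.card ((X × Y × Z) → Fin (n + 1)) : ℝ)
            = ((n:ℝ) + 1) ^ (Fintype.card (X × Y × Z)) := by
          rw [Fintype.card_fun, Fintype.card_fin]
          push_cast
          ring
        rw [hcard]
        exact hn1le n hn
    _ = (2:ℝ) ^ (-(n:ℝ) * (R - ε)) := by
        rw [← Real.rpow_add two_pos]
        congr 1
        ring
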